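/- Let A ∈ ℝ^{m×n} and let σ = (σ₁,…,σ_n) be a vector of independent Rademacher random variables (uniform on {−1,1}). Then for every p ≥ 1: (E ‖Aσ‖₂^p)^{1/p} ≤ ‖A‖_F + 2√(2p) ‖A‖, where ‖A‖_F is the Frobenius norm and ‖A‖ is the ℓ₂→ℓ₂ operator norm. -/

import Mathlib

open MeasureTheory ProbabilityTheory
open scoped ENNReal NNReal

noncomputable section

namespace SDR

/-- Squared Euclidean norm. -/
def sqSum {ι : Type*} [Fintype ι] (v : ι → ℝ) : ℝ := ∑ i, v i ^ 2

/-- Euclidean norm. -/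
def l2 {ι : Type*} [Fintype ι] (v : ι → ℝ) : ℝ := Real.sqrt (∑ i, v i ^ 2)

/-- Standard Gaussian measure on `ℝ^n`. -/
def stdGaussian (n : ℕ) : Measure (Fin n → ℝ) :=
  Measure.pi fun _ => gaussianReal 0 1

/-- Gaussian mean width of a subset of `ℝ^n`. -/
def gaussWidth {n : ℕ} (T : Set (Fin n → ℝ)) : ℝ :=
  ∫ g, (⨆ x : T, ∑ j, g j * x.1 j) ∂stdGaussian n

/-- Bernoulli measure on `ℝ` with mean `p` (supported on `{0,1}`). -/
def bernoulliReal (p : ℝ) : Measure ℝ :=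
  (Real.toNNReal (1 - p)) • Measure.dirac 0 + (Real.toNNReal p) • Measure.dirac 1

instance (p : ℝ) : IsFiniteMeasure (bernoulliReal p) := by
  unfold bernoulliReal; infer_instance

/-- Product of i.i.d. Bernoulli measures on `ℝ^n`. -/
def bernoulliPi (n : ℕ) (p : ℝ) : Measure (Fin n → ℝ) :=
  Measure.pi fun _ => bernoulliReal p

/-- The complexity parameter `κ(T)`. -/
def kappa (m s : ℕ) {n : ℕ} (T : Set (Fin n → ℝ)) : ℝ :=
  ⨆ q : {q : ℝ // 1 ≤ q ∧ q ≤ ((m : ℝ) / s) * Real.log s},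
    (1 / Real.sqrt (q.1 * s)) *
      (∫ η, (∫ g, (⨆ x : T, |∑ j, η j * g j * x.1 j|) ∂stdGaussian n) ^ q.1
        ∂bernoulliPi n (q.1 * s / (m * Real.log s))) ^ (1 / q.1)

/-- The random semi-norm `‖x‖_δ`. -/
def deltaNorm {m n : ℕ} (s : ℕ) (δ : Fin m → Fin n → ℝ) (x : Fin n → ℝ) : ℝ :=
  (1 / Real.sqrt s) * ⨆ i : Fin m, Real.sqrt (∑ j, δ i j * x j ^ 2)

/-- Diameter of `T` under `‖·‖_δ`. -/
def deltaDiam {m n : ℕ} (s : ℕ) (δ : Fin m → Fin n → ℝ) (T : Set (Fin n → ℝ)) : ℝ :=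
  ⨆ x : T, deltaNorm s δ x.1

/-- Talagrand's `γ₂` functional of a set `S` with respect to a (semi-)metric `ρ`. -/
def gamma2 {E : Type*} (S : Set E) (ρ : E → E → ℝ) : ℝ :=
  ⨅ A : {A : ℕ → Finset E // (∀ r : ℕ, ↑(A r) ⊆ S) ∧ (A 0).card = 1 ∧
      (∀ r : ℕ, (A r).card ≤ 2 ^ 2 ^ r) ∧ ∀ r : ℕ, A r ⊆ A (r + 1)},
    ⨆ x : S, ∑' r : ℕ, (2 : ℝ) ^ ((r : ℝ) / 2) * ⨅ y : (A.1 r), ρ x.1 y.1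

/-- The semi-norm `⦀x⦀_T = sup_{y ∈ T} |⟨x, y⟩|`. -/
def tnorm {n : ℕ} (T : Set (Fin n → ℝ)) (x : Fin n → ℝ) : ℝ :=
  ⨆ y : T, |∑ j, x j * y.1 j|

/-- The random 0/1 array underlying an SJLT with column sparsity `s`. -/
def IsSJLTDelta {Ω : Type*} [MeasurableSpace Ω] (μ : Measure Ω)
    (m n s : ℕ) (δ : Ω → Fin m → Fin n → ℝ) : Prop :=
  (∀ i j, Measurable fun ω => δ ω i j) ∧
  (∀ ω i j, δ ω i j = 0 ∨ δ ω i j = 1) ∧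
  (∀ ω j, ∑ i, δ ω i j = s) ∧
  (∀ (j : Fin n) (I : Finset (Fin m)),
    ∫ ω, ∏ i ∈ I, δ ω i j ∂μ ≤ ((s : ℝ) / m) ^ I.card) ∧
  iIndepFun (fun (j : Fin n) (ω : Ω) (i : Fin m) => δ ω i j) μ

/-- An i.i.d. Rademacher array. -/
def IsRademacherArray {Ω : Type*} [MeasurableSpace Ω] (μ : Measure Ω)
    (m n : ℕ) (σ : Ω → Fin m → Fin n → ℝ) : Prop :=
  (∀ i j, Measurable fun ω => σ ω i j) ∧
  (∀ i j, μ {ω | σ ω i j = 1} = 1/2 ∧ μ {ω | σ ω i j = -1} = 1/2) ∧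
  iIndepFun (fun (p : Fin m × Fin n) (ω : Ω) => σ ω p.1 p.2) μ

/-- A sparse Johnson–Lindenstrauss transform with `m` rows, `n` columns and
column sparsity `s`, realized on a probability space `(Ω, μ)`. -/
def IsSJLT {Ω : Type*} [MeasurableSpace Ω] (μ : Measure Ω)
    (m n s : ℕ) (σ δ : Ω → Fin m → Fin n → ℝ)
    (Φ : Ω → Matrix (Fin m) (Fin n) ℝ) : Prop :=
  IsRademacherArray μ m n σ ∧ IsSJLTDelta μ m n s δ ∧
  IndepFun (fun ω => σ ω) (fun ω => δ ω) μ ∧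
  ∀ ω i j, Φ ω i j = σ ω i j * δ ω i j / Real.sqrt s

/-- Covering number of `S` by balls of radius `u` (in the semi-norm `N`)
centered at points of `S`. -/
def covNum {n : ℕ} (S : Set (Fin n → ℝ)) (N : (Fin n → ℝ) → ℝ) (u : ℝ) : ℝ≥0∞ :=
  ⨅ F : {F : Finset (Fin n → ℝ) // ↑F ⊆ S ∧ ∀ x ∈ S, ∃ y ∈ F, N (x - y) ≤ u},
    (F.1.card : ℝ≥0∞)

/-- Logarithm of the covering number. -/
def logCov {n : ℕ} (S : Set (Fin n → ℝ)) (N : (Fin n → ℝ) → ℝ) (u : ℝ) : ℝ :=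
  Real.log (covNum S N u).toReal

/-- `N` is a semi-norm. -/
def IsSeminorm {n : ℕ} (N : (Fin n → ℝ) → ℝ) : Prop :=
  (∀ x y, N (x + y) ≤ N x + N y) ∧ ∀ (a : ℝ) (x), N (a • x) = |a| * N x

/-- `t` is an admissible type-2 constant for the semi-norm `N`. -/
def IsType2With {n : ℕ} (N : (Fin n → ℝ) → ℝ) (t : ℝ) : Prop :=
  ∀ (k : ℕ) (x : Fin k → Fin n → ℝ),
    (∫ g, N (∑ α, g α • x α) ∂stdGaussian k) ≤ t * Real.sqrt (∑ α, N (x α) ^ 2)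

/-- The type-2 constant of the semi-norm `N`. -/
def type2Const {n : ℕ} (N : (Fin n → ℝ) → ℝ) : ℝ :=
  sInf {t : ℝ | 0 ≤ t ∧ IsType2With N t}

/-- Diameter of `S` with respect to the semi-norm `N`. -/
def diamN {n : ℕ} (N : (Fin n → ℝ) → ℝ) (S : Set (Fin n → ℝ)) : ℝ :=
  ⨆ x : S, ⨆ y : S, N (x.1 - y.1)

/-- The `ℓ_{2,1}` block norm on `ℝ^{b × D}`. -/
def norm21 {b D : ℕ} (x : Fin b × Fin D → ℝ) : ℝ :=
  ∑ ℓ : Fin b, Real.sqrt (∑ k : Fin D, x (ℓ, k) ^ 2)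

/-- The norm `⦀A⦀` of a block matrix. -/
def blockNorm {n b D : ℕ} (A : Matrix (Fin n) (Fin b × Fin D) ℝ) : ℝ :=
  ⨆ ℓ : Fin b, Real.sqrt (∑ j : Fin n, ∑ k : Fin D, A j (ℓ, k) ^ 2)

/-- The norm `‖A‖_{ℓ_{2,1} → ℓ_∞}` of a block matrix. -/
def norm21ToInf {n b D : ℕ} (A : Matrix (Fin n) (Fin b × Fin D) ℝ) : ℝ :=
  ⨆ j : Fin n, ⨆ ℓ : Fin b, Real.sqrt (∑ k : Fin D, A j (ℓ, k) ^ 2)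

/-- The tangent cone of `C` at `x`: the closed cone generated by `C - {x}`. -/
def tangentCone {ι : Type*} [Fintype ι] (C : Set (ι → ℝ)) (x : ι → ℝ) : Set (ι → ℝ) :=
  closure {v | ∃ t : ℝ, 0 ≤ t ∧ ∃ y ∈ C, v = t • (y - x)}

/-- `Z₁(A, Φ, K) = inf_{v ∈ AK ∩ S^{n-1}} ‖Φ v‖₂²`. -/
def Z1 {n m : ℕ} {ι : Type*} [Fintype ι] (A : Matrix (Fin n) ι ℝ)
    (Φ : Matrix (Fin m) (Fin n) ℝ) (K : Set (ι → ℝ)) : ℝ :=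
  ⨅ v : {v : Fin n → ℝ // (∃ y ∈ K, A.mulVec y = v) ∧ ∑ i, v i ^ 2 = 1},
    ∑ i, (Φ.mulVec v.1 i) ^ 2

/-- `Z₂(A, Φ, K, u) = sup_{v ∈ AK ∩ S^{n-1}} |⟨Φu, Φv⟩ - ⟨u, v⟩|`. -/
def Z2 {n m : ℕ} {ι : Type*} [Fintype ι] (A : Matrix (Fin n) ι ℝ)
    (Φ : Matrix (Fin m) (Fin n) ℝ) (K : Set (ι → ℝ)) (u : Fin n → ℝ) : ℝ :=
  ⨆ v : {v : Fin n → ℝ // (∃ y ∈ K, A.mulVec y = v) ∧ ∑ i, v i ^ 2 = 1},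
    |(∑ i, Φ.mulVec u i * Φ.mulVec v.1 i) - ∑ i, u i * v.1 i|

/-- The incoherence (largest leverage score) of a subspace of `ℝ^n`. -/
def incoherence {n : ℕ} (E : Submodule ℝ (EuclideanSpace ℝ (Fin n))) : ℝ :=
  ⨆ j : Fin n,
    ‖(E.orthogonalProjectionOnto (EuclideanSpace.single j 1) : EuclideanSpace ℝ (Fin n))‖


/-- The column space of a matrix, as a subspace of Euclidean space. -/
def colSpace {n d : ℕ} (A : Matrix (Fin n) (Fin d) ℝ) :
    Submodule ℝ (EuclideanSpace ℝ (Fin n)) :=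
  Submodule.span ℝ (Set.range fun k : Fin d => (WithLp.toLp 2 (fun i => A i k) : EuclideanSpace ℝ (Fin n)))

/-- The largest leverage score `μ(A)` of a matrix. -/
def colIncoherence {n d : ℕ} (A : Matrix (Fin n) (Fin d) ℝ) : ℝ :=
  incoherence (colSpace A)

/-- The `ℓ₂ → ℓ₂` operator norm of a matrix. -/
def opNorm {m n : ℕ} (A : Matrix (Fin m) (Fin n) ℝ) : ℝ :=
  ⨆ x : {x : Fin n → ℝ // sqSum x = 1}, l2 (A.mulVec x.1)

/-!
Pass to the uniform measure on the cube `{±1}ⁿ` and put `Z s = ‖A (signVec s)‖₂`. Entropy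
tensorizes over the cube, and the two-point bound `Ent ≤ (a - b)(log a - log b)/4` gives a
modified logarithmic Sobolev inequality: `Ent(e^{tZ}) ≤ t²v/2 · E e^{tZ}` whenever
`∑ⱼ (Z s - Z (flipAt j s))₊² ≤ v`. As `x ↦ ‖A x‖₂` is convex with subgradient `Aᵀ A x / ‖A x‖`,
of norm at most `‖A‖`, one may take `v = 4‖A‖²`. Herbst's argument turns the entropy bound into
`E e^{λ(Z - EZ)} ≤ e^{λ²v/2}`, whence `‖(Z - EZ)₊‖_p ≤ √(2pv)`; Minkowski's inequality and
`EZ ≤ (EZ²)^{1/2} = ‖A‖_F` conclude.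
-/

section

open Real Finset Set Filter Matrix
open scoped BigOperators Topology

section Entropy

variable {α β : Type*} [Fintype α] [Fintype β]

def ent (f : α → ℝ) : ℝ :=
  𝔼 a, f a * log (f a) - (𝔼 a, f a) * log (𝔼 a, f a)

lemma ent_comp_equiv (e : β ≃ α) (f : α → ℝ) : ent (f ∘ e) = ent f := by
  simp only [ent, Function.comp_apply, Fintype.expect_equiv e (fun b => f (e b)) f (fun _ => rfl),
    Fintype.expect_equiv e (fun b => f (e b) * log (f (e b))) (fun a => f a * log (f a))
      (fun _ => rfl)]

lemma ent_eq_expect_mul_log_div [Nonempty α] {f : α → ℝ} (hf : ∀ a, 0 < f a) :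
    ent f = 𝔼 a, f a * log (f a / 𝔼 a, f a) := by
  have hm : 0 < 𝔼 a, f a := expect_pos (fun a _ => hf a) univ_nonempty
  simp_rw [ent, fun a => log_div (hf a).ne' hm.ne', mul_sub, expect_sub_distrib, expect_mul]

lemma expect_mul_log_div_le [Nonempty α] {u v : α → ℝ} (hu : ∀ a, 0 < u a) (hv : ∀ a, 0 < v a) :
    (𝔼 a, u a) * log ((𝔼 a, u a) / 𝔼 a, v a) ≤ 𝔼 a, u a * log (u a / v a) := by
  set U := 𝔼 a, u a
  set V := 𝔼 a, v a
  have hU : 0 < U := expect_pos (fun a _ => hu a) univ_nonempty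
  have hV : 0 < V := expect_pos (fun a _ => hv a) univ_nonempty
  have key : ∀ a, u a * log (U / V) ≤ u a * log (u a / v a) - u a + v a * (U / V) := by
    intro a
    have hua := hu a
    have hva := hv a
    have hlog : log (v a * (U / V) / u a) = log (U / V) - log (u a / v a) := by
      rw [log_div (by positivity) hua.ne', log_mul hva.ne' (by positivity),
        log_div hua.ne' hva.ne']
      ring
    have h := mul_le_mul_of_nonneg_left
      (log_le_sub_one_of_pos (x := v a * (U / V) / u a) (by positivity)) hua.le
    rw [hlog, mul_sub_one, mul_div_cancel₀ _ hua.ne'] at h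
    linarith
  calc U * log (U / V) = 𝔼 a, u a * log (U / V) := by rw [expect_mul]
    _ ≤ 𝔼 a, (u a * log (u a / v a) - u a + v a * (U / V)) :=
        expect_le_expect fun a _ => key a
    _ = 𝔼 a, u a * log (u a / v a) := by
        rw [expect_add_distrib, expect_sub_distrib, ← expect_mul]
        change _ - U + V * (U / V) = _
        rw [mul_div_cancel₀ _ hV.ne']
        ring

lemma ent_expect_le [Nonempty α] [Nonempty β] (f : β → α → ℝ) (hf : ∀ b a, 0 < f b a) :
    ent (fun a => 𝔼 b, f b a) ≤ 𝔼 b, ent (f b) := by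
  rw [ent_eq_expect_mul_log_div fun a => expect_pos (fun b _ => hf b a) univ_nonempty]
  simp_rw [ent_eq_expect_mul_log_div (hf _)]
  rw [expect_comm]
  conv_rhs => rw [expect_comm]
  refine expect_le_expect fun a _ => ?_
  exact expect_mul_log_div_le (fun b => hf b a) fun b =>
    expect_pos (fun a _ => hf b a) univ_nonempty

lemma expect_prod_type {M : Type*} [AddCommMonoid M] [Module ℚ≥0 M] (g : α × β → M) :
    𝔼 x, g x = 𝔼 a, 𝔼 b, g (a, b) := by
  rw [← expect_product, univ_product_univ]

lemma ent_prod_eq (g : α × β → ℝ) :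
    ent g = 𝔼 a, ent (fun b => g (a, b)) + ent (fun a => 𝔼 b, g (a, b)) := by
  simp only [ent, expect_prod_type, expect_sub_distrib]
  ring

theorem ent_prod_le [Nonempty α] [Nonempty β] (g : α × β → ℝ) (hg : ∀ x, 0 < g x) :
    ent g ≤ 𝔼 a, ent (fun b => g (a, b)) + 𝔼 b, ent (fun a => g (a, b)) := by
  rw [ent_prod_eq]
  gcongr
  exact ent_expect_le (fun b a => g (a, b)) fun b a => hg (a, b)

lemma expect_fin_cons {M : Type*} [AddCommMonoid M] [Module ℚ≥0 M] {n : ℕ}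
    (F : (Fin (n + 1) → α) → M) : 𝔼 s, F s = 𝔼 b, 𝔼 x, F (Fin.cons b x) := by
  rw [← expect_prod_type fun x : α × (Fin n → α) => F (Fin.cons x.1 x.2)]
  exact (Fintype.expect_equiv (Fin.consEquiv fun _ => α) _ _ fun _ => rfl).symm

theorem ent_le_sum_expect_ent_update [Nonempty α] {n : ℕ} (g : (Fin n → α) → ℝ)
    (hg : ∀ s, 0 < g s) : ent g ≤ ∑ j, 𝔼 s, ent (fun c => g (Function.update s j c)) := by
  induction n with
  | zero => simp [ent, Finset.univ_unique]
  | succ n ih =>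
    calc ent g = ent (g ∘ Fin.consEquiv fun _ => α) := (ent_comp_equiv _ g).symm
      _ ≤ 𝔼 b, ent (fun x => g (Fin.cons b x)) + 𝔼 x, ent (fun b => g (Fin.cons b x)) :=
        ent_prod_le _ fun x => hg _
      _ ≤ ∑ k : Fin n, 𝔼 s, ent (fun c => g (Function.update s k.succ c))
          + 𝔼 s, ent (fun c => g (Function.update s 0 c)) := by
        gcongr ?_ + ?_
        · calc 𝔼 b, ent (fun x => g (Fin.cons b x))
              ≤ 𝔼 b, ∑ k, 𝔼 x, ent (fun c => g (Fin.cons b (Function.update x k c))) :=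
                expect_le_expect fun b _ => ih _ fun x => hg _
            _ = ∑ k : Fin n, 𝔼 s, ent (fun c => g (Function.update s k.succ c)) := by
                simp_rw [expect_fin_cons, Fin.cons_update]
                rw [expect_sum_comm]
        · simp_rw [expect_fin_cons, Fin.update_cons_zero, Fintype.expect_const, le_refl]
      _ = ∑ j, 𝔼 s, ent (fun c => g (Function.update s j c)) := by
        rw [Fin.sum_univ_succ, add_comm]

lemma ent_bool_le {f : Bool → ℝ} (hf : ∀ b, 0 < f b) :
    ent f ≤ (f true - f false) * (log (f true) - log (f false)) / 4 := by
  have hmean : ∀ g : Bool → ℝ, 𝔼 b, g b = (g true + g false) / 2 := by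
    intro g
    rw [Fintype.expect_eq_sum_div_card, Fintype.sum_bool, Fintype.card_bool]
    norm_num
  have hlog : (log (f true) + log (f false)) / 2 ≤ log ((f true + f false) / 2) := by
    have := strictConcaveOn_log_Ioi.concaveOn.2 (hf true) (hf false)
      (by norm_num : (0 : ℝ) ≤ 1 / 2) (by norm_num : (0 : ℝ) ≤ 1 / 2) (by norm_num)
    simp only [smul_eq_mul] at this
    rw [show (f true + f false) / 2 = 1 / 2 * f true + 1 / 2 * f false by ring]
    linarith
  have hm : 0 < (f true + f false) / 2 := by linarith [hf true, hf false]
  rw [ent, hmean, hmean]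
  nlinarith [mul_le_mul_of_nonneg_left hlog hm.le]

end Entropy

lemma tendsto_log_div_nhdsGT_zero {H : ℝ → ℝ} {d : ℝ} (hH : HasDerivAt H d 0) (h0 : H 0 = 1) :
    Tendsto (fun t => log (H t) / t) (𝓝[>] 0) (𝓝 d) := by
  have hslope := hasDerivAt_iff_tendsto_slope.mp (hH.log (by simp [h0]))
  rw [h0, div_one] at hslope
  exact (hslope.mono_left (nhdsWithin_mono _ fun t ht => ne_of_gt ht)).congr fun t => by
    simp [slope_def_field, h0]

theorem herbst_log_le {H H' : ℝ → ℝ} (hH : ∀ t, 0 ≤ t → HasDerivAt H (H' t) t)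
    (hpos : ∀ t, 0 ≤ t → 0 < H t) (h0 : H 0 = 1) {v : ℝ}
    (hent : ∀ t, 0 < t → t * H' t - H t * log (H t) ≤ t ^ 2 * v / 2 * H t)
    {l : ℝ} (hl : 0 < l) : log (H l) ≤ l * H' 0 + l ^ 2 * v / 2 := by
  set φ : ℝ → ℝ := fun t => log (H t) / t - t * (v / 2)
  have hφ : ∀ t, 0 < t →
      HasDerivAt φ ((H' t / H t * t - log (H t) * 1) / t ^ 2 - v / 2) t := fun t ht =>
    (((hH t ht.le).log (hpos t ht.le).ne').div (hasDerivAt_id t) ht.ne').sub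
      (hasDerivAt_mul_const (v / 2))
  have hφ_nonpos : ∀ t, 0 < t → (H' t / H t * t - log (H t) * 1) / t ^ 2 - v / 2 ≤ 0 := by
    intro t ht
    have hHt := hpos t ht.le
    have := hent t ht
    rw [sub_nonpos, div_le_iff₀ (by positivity), mul_one, div_mul_eq_mul_div,
      sub_le_iff_le_add, div_le_iff₀ hHt]
    nlinarith
  have hanti : AntitoneOn φ (Ioi 0) := by
    refine antitoneOn_of_hasDerivWithinAt_nonpos (convex_Ioi 0)
      (f' := fun t => (H' t / H t * t - log (H t) * 1) / t ^ 2 - v / 2)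
      (fun t ht => (hφ t ht).continuousAt.continuousWithinAt) (fun t ht => ?_) (fun t ht => ?_)
    · rw [interior_Ioi] at ht
      exact (hφ t ht).hasDerivWithinAt
    · rw [interior_Ioi] at ht
      exact hφ_nonpos t ht
  have hlim : Tendsto φ (𝓝[>] 0) (𝓝 (H' 0)) := by
    have h2 : Tendsto (fun t : ℝ => t * (v / 2)) (𝓝[>] 0) (𝓝 0) := by
      simpa using ((continuous_mul_const (v / 2)).tendsto 0).mono_left nhdsWithin_le_nhds
    simpa using (tendsto_log_div_nhdsGT_zero (hH 0 le_rfl) h0).sub h2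
  have hφl : φ l ≤ H' 0 := by
    refine ge_of_tendsto hlim ?_
    filter_upwards [Ioc_mem_nhdsGT hl] with t ht
    exact hanti ht.1 hl ht.2
  have : log (H l) / l ≤ H' 0 + l * (v / 2) := by simp only [φ] at hφl; linarith
  rw [div_le_iff₀ hl] at this
  linarith

lemma hasDerivAt_expect_exp_mul {ι : Type*} [Fintype ι] (Z : ι → ℝ) (t : ℝ) :
    HasDerivAt (fun t => 𝔼 i, exp (t * Z i)) (𝔼 i, exp (t * Z i) * Z i) t := by
  simp only [Fintype.expect_eq_sum_div_card]
  exact (HasDerivAt.fun_sum fun i _ => (hasDerivAt_mul_const (Z i)).exp).div_const _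

section Moments

variable {α : Type*} [Fintype α]

lemma rpow_le_mul_exp {p l x : ℝ} (hp : 0 < p) (hl : 0 < l) (hx : 0 ≤ x) :
    x ^ p ≤ (p / (exp 1 * l)) ^ p * exp (l * x) := by
  set y := l * x / p
  have hy : y ≤ exp (y - 1) := by linarith [add_one_le_exp (y - 1)]
  have hxy : x = p / l * y := by simp only [y]; field_simp
  calc x ^ p = (p / l) ^ p * y ^ p := by rw [hxy, mul_rpow (by positivity) (by positivity)]
    _ ≤ (p / l) ^ p * exp (y - 1) ^ p := by gcongr
    _ = (p / (exp 1 * l)) ^ p * exp (l * x) := by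
      rw [← exp_mul, mul_comm (exp 1), ← div_div, div_rpow (by positivity) (exp_pos 1).le,
        exp_one_rpow, div_mul_eq_mul_div, mul_div_assoc, ← exp_sub]
      congr 2
      simp only [y]
      field_simp

lemma expect_Lp_add_le_of_nonneg {f g : α → ℝ} (hf : ∀ a, 0 ≤ f a) (hg : ∀ a, 0 ≤ g a) {p : ℝ}
    (hp : 1 ≤ p) :
    (𝔼 a, (f a + g a) ^ p) ^ (1 / p) ≤ (𝔼 a, f a ^ p) ^ (1 / p) + (𝔼 a, g a ^ p) ^ (1 / p) := by
  have hf' : ∀ a, 0 ≤ f a ^ p := fun a => rpow_nonneg (hf a) p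
  have hg' : ∀ a, 0 ≤ g a ^ p := fun a => rpow_nonneg (hg a) p
  have hfg' : ∀ a, 0 ≤ (f a + g a) ^ p := fun a => rpow_nonneg (add_nonneg (hf a) (hg a)) p
  simp only [Fintype.expect_eq_sum_div_card]
  rw [div_rpow (sum_nonneg fun a _ => hfg' a) (by positivity),
    div_rpow (sum_nonneg fun a _ => hf' a) (by positivity),
    div_rpow (sum_nonneg fun a _ => hg' a) (by positivity), ← add_div]
  gcongr
  exact Lp_add_le_of_nonneg univ hp (fun a _ => hf a) fun a _ => hg a

lemma expect_Lp_le_add_Lp_max_sub [Nonempty α] {Z : α → ℝ} (hZ : ∀ a, 0 ≤ Z a) {c : ℝ}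
    (hc : 0 ≤ c) {p : ℝ} (hp : 1 ≤ p) :
    (𝔼 a, Z a ^ p) ^ (1 / p) ≤ c + (𝔼 a, max (Z a - c) 0 ^ p) ^ (1 / p) :=
  calc (𝔼 a, Z a ^ p) ^ (1 / p) ≤ (𝔼 a, (c + max (Z a - c) 0) ^ p) ^ (1 / p) := by
        gcongr with a
        exacts [expect_nonneg fun a _ => rpow_nonneg (hZ a) p, hZ a,
          by linarith [le_max_left (Z a - c) 0]]
    _ ≤ (𝔼 _a : α, c ^ p) ^ (1 / p) + (𝔼 a, max (Z a - c) 0 ^ p) ^ (1 / p) :=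
        expect_Lp_add_le_of_nonneg (fun _ => hc) (fun _ => le_max_right _ _) hp
    _ = c + (𝔼 a, max (Z a - c) 0 ^ p) ^ (1 / p) := by
        rw [Fintype.expect_const, ← rpow_mul hc, mul_one_div_cancel (by positivity), rpow_one]

theorem expect_Lp_max_le_of_expect_exp_le [Nonempty α] {X : α → ℝ} {v : ℝ} (hv : 0 < v)
    (hmgf : ∀ l, 0 < l → 𝔼 a, exp (l * X a) ≤ exp (l ^ 2 * v / 2)) {p : ℝ} (hp : 1 ≤ p) :
    (𝔼 a, max (X a) 0 ^ p) ^ (1 / p) ≤ sqrt (2 * p * v) := by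
  have hp0 : 0 < p := by linarith
  -- `λ = √(p / v)`; the resulting constant `2 e^{-1/2}` is at most `√2` because `e ≥ 2`.
  set l := sqrt (p / v)
  have hl : 0 < l := sqrt_pos.2 (by positivity)
  have hl2 : l ^ 2 = p / v := sq_sqrt (by positivity)
  set c := p / (exp 1 * l)
  have hmoment : 𝔼 a, max (X a) 0 ^ p ≤ c ^ p * (2 * exp (p / 2)) :=
    calc 𝔼 a, max (X a) 0 ^ p ≤ 𝔼 a, c ^ p * exp (l * max (X a) 0) :=
          expect_le_expect fun a _ => rpow_le_mul_exp hp0 hl (le_max_right _ _)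
      _ ≤ 𝔼 a, c ^ p * (exp (l * X a) + 1) := by
          gcongr with a
          rw [mul_max_of_nonneg _ _ hl.le, mul_zero, exp_monotone.map_max, exp_zero]
          exact max_le_add_of_nonneg (exp_pos _).le zero_le_one
      _ = c ^ p * (𝔼 a, exp (l * X a) + 1) := by
          rw [← mul_expect, expect_add_distrib, Fintype.expect_const]
      _ ≤ c ^ p * (exp (p / 2) + exp (p / 2)) := by
          gcongr
          · simpa [hl2, div_mul_cancel₀ _ hv.ne'] using hmgf l hl
          · exact one_le_exp (by positivity)
      _ = c ^ p * (2 * exp (p / 2)) := by ring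
  calc (𝔼 a, max (X a) 0 ^ p) ^ (1 / p) ≤ (c ^ p * (2 * exp (p / 2))) ^ (1 / p) := by
        gcongr
    _ = c * 2 ^ (1 / p) * exp (1 / 2) := by
        rw [mul_rpow (by positivity) (by positivity), mul_rpow (by positivity) (by positivity),
          ← rpow_mul (by positivity), mul_one_div_cancel hp0.ne', rpow_one, ← exp_mul,
          mul_assoc, show p / 2 * (1 / p) = 1 / 2 by field_simp]
    _ ≤ c * 2 * exp (1 / 2) := by
        gcongr
        calc (2 : ℝ) ^ (1 / p) ≤ 2 ^ (1 : ℝ) :=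
              rpow_le_rpow_of_exponent_le one_le_two ((div_le_one hp0).2 hp)
          _ = 2 := rpow_one 2
    _ ≤ sqrt (2 * p * v) := by
        have he : 2 ≤ exp 1 := by linarith [add_one_le_exp 1]
        rw [le_sqrt (by positivity) (by positivity), mul_pow, mul_pow, ← exp_nat_mul, div_pow,
          mul_pow, hl2, show ((2 : ℕ) : ℝ) * (1 / 2) = 1 by norm_num]
        field_simp
        nlinarith [mul_le_mul_of_nonneg_left he (by positivity : 0 ≤ p * p * v * exp 1)]

theorem expect_rpow_le_of_expect_exp_le [Nonempty α] {Z : α → ℝ} (hZ : ∀ a, 0 ≤ Z a) {v : ℝ}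
    (hv : 0 < v) (hmgf : ∀ l, 0 < l → 𝔼 a, exp (l * (Z a - 𝔼 a, Z a)) ≤ exp (l ^ 2 * v / 2))
    {p : ℝ} (hp : 1 ≤ p) :
    (𝔼 a, Z a ^ p) ^ (1 / p) ≤ 𝔼 a, Z a + sqrt (2 * p * v) := by
  calc (𝔼 a, Z a ^ p) ^ (1 / p) ≤ 𝔼 a, Z a + (𝔼 a, max (Z a - 𝔼 a, Z a) 0 ^ p) ^ (1 / p) :=
        expect_Lp_le_add_Lp_max_sub hZ (expect_nonneg fun a _ => hZ a) hp
    _ ≤ 𝔼 a, Z a + sqrt (2 * p * v) := by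
        gcongr
        exact expect_Lp_max_le_of_expect_exp_le hv hmgf hp

end Moments

section Cube

variable {n : ℕ}

def flipAt (j : Fin n) (s : Fin n → Bool) : Fin n → Bool :=
  Function.update s j (!s j)

lemma flipAt_flipAt (j : Fin n) (s : Fin n → Bool) : flipAt j (flipAt j s) = s := by
  simp [flipAt]

lemma expect_comp_flipAt {M : Type*} [AddCommMonoid M] [Module ℚ≥0 M] (j : Fin n)
    (F : (Fin n → Bool) → M) : 𝔼 s, F (flipAt j s) = 𝔼 s, F s :=
  Fintype.expect_equiv (Function.Involutive.toPerm _ (flipAt_flipAt j)) _ _ fun _ => rfl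

theorem ent_le_sum_expect_flipAt (g : (Fin n → Bool) → ℝ) (hg : ∀ s, 0 < g s) :
    ent g ≤ ∑ j, 𝔼 s, (g s - g (flipAt j s)) * (log (g s) - log (g (flipAt j s))) / 4 := by
  refine (ent_le_sum_expect_ent_update g hg).trans
    (sum_le_sum fun j _ => expect_le_expect fun s _ => (ent_bool_le fun c => hg _).trans ?_)
  -- `Function.update s j (s j) = s`: the two-point entropy at `j` sees `s` and `flipAt j s`.
  have hs := Function.update_eq_self j s
  cases h : s j <;> rw [h] at hs <;> simp only [flipAt, h, hs, Bool.not_true, Bool.not_false]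
  · linarith
  · linarith

lemma exp_sub_exp_mul_sub_le (a b : ℝ) :
    (exp a - exp b) * (a - b) ≤ max (a - b) 0 ^ 2 * exp a + max (b - a) 0 ^ 2 * exp b := by
  wlog hba : b ≤ a generalizing a b
  · linarith [this b a (le_of_not_ge hba)]
  have hexp : exp a - exp b ≤ (a - b) * exp a := by
    have := mul_le_mul_of_nonneg_right (add_one_le_exp (b - a)) (exp_pos a).le
    rw [← exp_add, sub_add_cancel] at this
    linarith
  rw [max_eq_left (sub_nonneg.2 hba), max_eq_right (sub_nonpos.2 hba)]
  nlinarith [mul_le_mul_of_nonneg_right hexp (sub_nonneg.2 hba), exp_pos b]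

theorem ent_exp_le {Z : (Fin n → Bool) → ℝ} {v : ℝ}
    (hv : ∀ s, ∑ j, max (Z s - Z (flipAt j s)) 0 ^ 2 ≤ v) {t : ℝ} (ht : 0 ≤ t) :
    ent (fun s => exp (t * Z s)) ≤ t ^ 2 * v / 2 * 𝔼 s, exp (t * Z s) := by
  set D : Fin n → (Fin n → Bool) → ℝ := fun j s => max (Z s - Z (flipAt j s)) 0 ^ 2
  have hpair : ∀ j s,
      (exp (t * Z s) - exp (t * Z (flipAt j s))) *
          (log (exp (t * Z s)) - log (exp (t * Z (flipAt j s)))) / 4 ≤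
        t ^ 2 / 4 * (D j s * exp (t * Z s) + D j (flipAt j s) * exp (t * Z (flipAt j s))) := by
    intro j s
    have h := exp_sub_exp_mul_sub_le (t * Z s) (t * Z (flipAt j s))
    have hmax : ∀ x, max (t * x) 0 = t * max x 0 := fun x => by
      rw [mul_max_of_nonneg _ _ ht, mul_zero]
    simp only [← mul_sub, hmax, mul_pow] at h
    simp only [log_exp, D, flipAt_flipAt, ← mul_sub]
    linarith
  have hflip : ∀ j, 𝔼 s, D j (flipAt j s) * exp (t * Z (flipAt j s)) =
      𝔼 s, D j s * exp (t * Z s) := fun j =>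
    expect_comp_flipAt j fun s => D j s * exp (t * Z s)
  calc ent (fun s => exp (t * Z s))
      ≤ ∑ j, 𝔼 s, (exp (t * Z s) - exp (t * Z (flipAt j s))) *
          (log (exp (t * Z s)) - log (exp (t * Z (flipAt j s)))) / 4 :=
        ent_le_sum_expect_flipAt _ fun s => exp_pos _
    _ ≤ ∑ j, 𝔼 s, t ^ 2 / 4 *
          (D j s * exp (t * Z s) + D j (flipAt j s) * exp (t * Z (flipAt j s))) := by
        gcongr with j _ s _
        exact hpair j s
    _ = t ^ 2 / 2 * ∑ j, 𝔼 s, D j s * exp (t * Z s) := by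
        simp only [← mul_expect, expect_add_distrib, hflip, ← two_mul, ← mul_sum]
        ring
    _ = t ^ 2 / 2 * 𝔼 s, exp (t * Z s) * ∑ j, D j s := by
        simp only [← expect_sum_comm, mul_comm (exp _), sum_mul]
    _ ≤ t ^ 2 / 2 * 𝔼 s, exp (t * Z s) * v := by
        gcongr with s _
        exact hv s
    _ = t ^ 2 * v / 2 * 𝔼 s, exp (t * Z s) := by
        rw [← expect_mul]
        ring

theorem expect_exp_mul_sub_expect_le {Z : (Fin n → Bool) → ℝ} {v : ℝ}
    (hv : ∀ s, ∑ j, max (Z s - Z (flipAt j s)) 0 ^ 2 ≤ v) {l : ℝ} (hl : 0 < l) :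
    𝔼 s, exp (l * (Z s - 𝔼 s, Z s)) ≤ exp (l ^ 2 * v / 2) := by
  set H : ℝ → ℝ := fun t => 𝔼 s, exp (t * Z s)
  have hH : ∀ t, 0 < H t := fun t => expect_pos (fun s _ => exp_pos _) univ_nonempty
  have hent : ∀ t, 0 < t →
      t * 𝔼 s, exp (t * Z s) * Z s - H t * log (H t) ≤ t ^ 2 * v / 2 * H t := by
    intro t ht
    have h := ent_exp_le hv ht.le
    rw [ent] at h
    simp only [log_exp] at h
    rw [mul_expect]
    convert h using 3 with s
    ring
  have hlog : log (H l) ≤ l * 𝔼 s, Z s + l ^ 2 * v / 2 := by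
    simpa using herbst_log_le (fun t _ => hasDerivAt_expect_exp_mul Z t) (fun t _ => hH t)
      (by simp) hent hl
  calc 𝔼 s, exp (l * (Z s - 𝔼 s, Z s)) = exp (-(l * 𝔼 s, Z s)) * H l := by
        rw [mul_expect]
        exact expect_congr rfl fun s _ => by rw [← exp_add]; ring_nf
    _ ≤ exp (-(l * 𝔼 s, Z s)) * exp (l * 𝔼 s, Z s + l ^ 2 * v / 2) := by
        gcongr
        rwa [← exp_log (hH l), exp_le_exp]
    _ = exp (l ^ 2 * v / 2) := by rw [← exp_add]; ring_nf

end Cube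

section Euclidean

open scoped Matrix.Norms.L2Operator

variable {ι : Type*} [Fintype ι] {m n : ℕ}

lemma l2_eq_norm (v : ι → ℝ) : l2 v = ‖(WithLp.toLp 2 v : EuclideanSpace ℝ ι)‖ := by
  simp [l2, EuclideanSpace.norm_eq]

lemma l2_nonneg (v : ι → ℝ) : 0 ≤ l2 v := sqrt_nonneg _

lemma l2_mul_sub_l2_le (w u : ι → ℝ) : l2 w * (l2 w - l2 u) ≤ w ⬝ᵥ (w - u) := by
  have hww : w ⬝ᵥ w = l2 w ^ 2 := by
    rw [l2, sq_sqrt (by positivity), dotProduct]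
    exact sum_congr rfl fun i _ => (sq (w i)).symm
  have hwu : w ⬝ᵥ u ≤ l2 w * l2 u := sum_mul_le_sqrt_mul_sqrt _ _ _
  rw [dotProduct_sub, hww]
  linarith

lemma l2_mulVec_le_norm_mul (A : Matrix (Fin m) (Fin n) ℝ) (x : Fin n → ℝ) :
    l2 (A *ᵥ x) ≤ ‖A‖ * l2 x := by
  rw [l2_eq_norm, l2_eq_norm]
  exact Matrix.l2_opNorm_mulVec A _

lemma opNorm_eq_l2_opNorm (A : Matrix (Fin m) (Fin n) ℝ) : opNorm A = ‖A‖ := by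
  have hle : ∀ x : {x : Fin n → ℝ // sqSum x = 1}, l2 (A *ᵥ x.1) ≤ ‖A‖ := fun x => by
    simpa [l2, ← sqSum.eq_def, x.2] using l2_mulVec_le_norm_mul A x.1
  refine le_antisymm (Real.iSup_le hle (norm_nonneg _)) ?_
  rw [Matrix.l2_opNorm_def, ← ContinuousLinearMap.sSup_sphere_eq_norm]
  refine Real.sSup_le ?_ (Real.iSup_nonneg fun _ => l2_nonneg _)
  rintro _ ⟨y, hy, rfl⟩
  have hy' : sqSum (WithLp.ofLp y) = 1 := by
    simpa [EuclideanSpace.norm_eq, sqSum] using hy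
  refine le_trans (le_of_eq ?_) (le_ciSup ⟨‖A‖, ?_⟩ ⟨WithLp.ofLp y, hy'⟩)
  · rw [l2_eq_norm]
    rfl
  · rintro _ ⟨x, rfl⟩
    exact hle x

lemma opNorm_nonneg (A : Matrix (Fin m) (Fin n) ℝ) : 0 ≤ opNorm A :=
  opNorm_eq_l2_opNorm A ▸ norm_nonneg _

lemma l2_mulVec_le (A : Matrix (Fin m) (Fin n) ℝ) (x : Fin n → ℝ) :
    l2 (A *ᵥ x) ≤ opNorm A * l2 x :=
  opNorm_eq_l2_opNorm A ▸ l2_mulVec_le_norm_mul A x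

lemma l2_vecMul_le (A : Matrix (Fin m) (Fin n) ℝ) (x : Fin m → ℝ) :
    l2 (x ᵥ* A) ≤ opNorm A * l2 x := by
  have h := l2_mulVec_le Aᵀ x
  rwa [Matrix.mulVec_transpose, opNorm_eq_l2_opNorm, ← Matrix.conjTranspose_eq_transpose_of_trivial,
    Matrix.l2_opNorm_conjTranspose, ← opNorm_eq_l2_opNorm] at h

end Euclidean

section Signs

variable {m n : ℕ}

def signVec {ι : Type*} (s : ι → Bool) : ι → ℝ := fun j => if s j then 1 else -1

lemma decide_signVec_eq_one {ι : Type*} (s : ι → Bool) (j : ι) :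
    decide (signVec s j = 1) = s j := by
  cases h : s j <;> norm_num [signVec, h]

lemma signVec_injective {ι : Type*} : Function.Injective (signVec : (ι → Bool) → ι → ℝ) :=
  fun s t h => funext fun j => by rw [← decide_signVec_eq_one s, ← decide_signVec_eq_one t, h]

lemma abs_signVec {ι : Type*} (s : ι → Bool) (j : ι) : |signVec s j| = 1 := by
  cases h : s j <;> simp [signVec, h]

lemma signVec_flipAt (j : Fin n) (s : Fin n → Bool) :
    signVec (flipAt j s) = signVec s - Pi.single j (2 * signVec s j) := by
  ext k
  by_cases hk : k = j
  · subst hk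
    cases h : s k <;> simp [signVec, flipAt, h] <;> norm_num
  · simp [signVec, flipAt, hk]

lemma expect_signVec_mul_signVec (j k : Fin n) :
    𝔼 s, signVec s j * signVec s k = if j = k then 1 else 0 := by
  split_ifs with hjk
  · subst hjk
    simp_rw [← abs_mul_abs_self (signVec _ j), abs_signVec, mul_one, Fintype.expect_const]
  · have hodd : 𝔼 s, signVec (flipAt j s) j * signVec (flipAt j s) k =
        -𝔼 s, signVec s j * signVec s k := by
      rw [← expect_neg_distrib]
      refine expect_congr rfl fun s _ => ?_
      simp [signVec_flipAt, Ne.symm hjk]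
      ring
    rw [expect_comp_flipAt j fun s => signVec s j * signVec s k] at hodd
    linarith

theorem expect_l2_mulVec_signVec_sq (A : Matrix (Fin m) (Fin n) ℝ) :
    𝔼 s, l2 (A *ᵥ signVec s) ^ 2 = ∑ i, ∑ j, A i j ^ 2 := by
  have hexpand : ∀ s, l2 (A *ᵥ signVec s) ^ 2 =
      ∑ i, ∑ j, ∑ k, A i j * A i k * (signVec s j * signVec s k) := fun s => by
    rw [l2, sq_sqrt (by positivity)]
    change ∑ i, (∑ j, A i j * signVec s j) ^ 2 = _
    simp only [sq, sum_mul_sum]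
    exact sum_congr rfl fun i _ => sum_congr rfl fun j _ => sum_congr rfl fun k _ => by ring
  simp_rw [hexpand, expect_sum_comm, ← mul_expect, expect_signVec_mul_signVec]
  simp only [mul_ite, mul_one, mul_zero, sum_ite_eq, Finset.mem_univ, if_true, sq]

lemma l2_mul_max_sub_l2_flipAt_le (A : Matrix (Fin m) (Fin n) ℝ) (s : Fin n → Bool) (j : Fin n) :
    l2 (A *ᵥ signVec s) * max (l2 (A *ᵥ signVec s) - l2 (A *ᵥ signVec (flipAt j s))) 0 ≤
      2 * |((A *ᵥ signVec s) ᵥ* A) j| := by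
  set w := A *ᵥ signVec s
  rw [mul_max_of_nonneg _ _ (l2_nonneg w), mul_zero]
  refine max_le ?_ (by positivity)
  calc l2 w * (l2 w - l2 (A *ᵥ signVec (flipAt j s)))
      ≤ w ⬝ᵥ (w - A *ᵥ signVec (flipAt j s)) := l2_mul_sub_l2_le _ _
    _ = (w ᵥ* A) j * (2 * signVec s j) := by
      rw [signVec_flipAt, mulVec_sub, sub_sub_cancel, dotProduct_mulVec, dotProduct_single]
    _ ≤ |(w ᵥ* A) j * (2 * signVec s j)| := le_abs_self _
    _ = 2 * |(w ᵥ* A) j| := by rw [abs_mul, abs_mul, abs_signVec, abs_two]; ring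

theorem sum_sq_max_l2_mulVec_signVec_sub_le (A : Matrix (Fin m) (Fin n) ℝ) (s : Fin n → Bool) :
    ∑ j, max (l2 (A *ᵥ signVec s) - l2 (A *ᵥ signVec (flipAt j s))) 0 ^ 2 ≤ 4 * opNorm A ^ 2 := by
  set w := A *ᵥ signVec s
  set M : Fin n → ℝ := fun j => max (l2 w - l2 (A *ᵥ signVec (flipAt j s))) 0
  change ∑ j, M j ^ 2 ≤ 4 * opNorm A ^ 2
  rcases (l2_nonneg w).eq_or_lt with hw | hw
  · have hzero : ∀ j, M j = 0 := fun j =>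
      max_eq_right (by linarith [l2_nonneg (A *ᵥ signVec (flipAt j s))])
    simp only [hzero, ne_eq, OfNat.ofNat_ne_zero, not_false_eq_true, zero_pow, sum_const_zero]
    positivity
  refine le_of_mul_le_mul_left ?_ (by positivity : 0 < l2 w ^ 2)
  calc l2 w ^ 2 * ∑ j, M j ^ 2 = ∑ j, (l2 w * M j) ^ 2 := by simp only [mul_sum, mul_pow]
    _ ≤ ∑ j, (2 * |(w ᵥ* A) j|) ^ 2 := sum_le_sum fun j _ =>
        pow_le_pow_left₀ (mul_nonneg (l2_nonneg w) (le_max_right _ _))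
          (l2_mul_max_sub_l2_flipAt_le A s j) 2
    _ = 4 * l2 (w ᵥ* A) ^ 2 := by
        rw [l2, sq_sqrt (by positivity), mul_sum]
        simp only [mul_pow, sq_abs]
        norm_num
    _ ≤ 4 * (opNorm A * l2 w) ^ 2 := by
        gcongr
        exacts [l2_nonneg _, l2_vecMul_le A w]
    _ = l2 w ^ 2 * (4 * opNorm A ^ 2) := by ring

theorem expect_rpow_l2_mulVec_signVec_le (A : Matrix (Fin m) (Fin n) ℝ) {p : ℝ} (hp : 1 ≤ p) :
    (𝔼 s, l2 (A *ᵥ signVec s) ^ p) ^ (1 / p) ≤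
      sqrt (∑ i, ∑ j, A i j ^ 2) + 2 * sqrt (2 * p) * opNorm A := by
  have hp0 : 0 < p := by linarith
  rcases (opNorm_nonneg A).eq_or_lt with hA | hA
  · have hzero : ∀ s, l2 (A *ᵥ signVec s) = 0 := fun s =>
      le_antisymm (by simpa [← hA] using l2_mulVec_le A (signVec s)) (l2_nonneg _)
    simp only [hzero, zero_rpow hp0.ne', Fintype.expect_const, zero_rpow (one_div_pos.2 hp0).ne',
      ← hA, mul_zero, add_zero]
    exact sqrt_nonneg _
  have hmean : 𝔼 s, l2 (A *ᵥ signVec s) ≤ sqrt (∑ i, ∑ j, A i j ^ 2) := by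
    rw [← expect_l2_mulVec_signVec_sq]
    apply le_sqrt_of_sq_le
    simpa using expect_mul_sq_le_sq_mul_sq univ (fun s => l2 (A *ᵥ signVec s)) 1
  have hdev : sqrt (2 * p * (4 * opNorm A ^ 2)) = 2 * sqrt (2 * p) * opNorm A := by
    rw [show 2 * p * (4 * opNorm A ^ 2) = 2 * p * (2 * opNorm A) ^ 2 by ring,
      sqrt_mul (by positivity), sqrt_sq (by positivity)]
    ring
  have hmom := expect_rpow_le_of_expect_exp_le (fun s => l2_nonneg _) (by positivity)
    (fun l hl => expect_exp_mul_sub_expect_le (sum_sq_max_l2_mulVec_signVec_sub_le A) hl) hp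
  linarith

end Signs

section Transfer

lemma integral_comp_eq_sum_of_ae_mem_range {Ω E ι : Type*} [MeasurableSpace Ω] {μ : Measure Ω}
    [IsFiniteMeasure μ] [Fintype ι] {X : Ω → E} {φ : ι → E} (hφ : Function.Injective φ)
    (hmeas : ∀ i, MeasurableSet {ω | X ω = φ i}) (hX : ∀ᵐ ω ∂μ, X ω ∈ range φ) (G : E → ℝ) :
    ∫ ω, G (X ω) ∂μ = ∑ i, μ.real {ω | X ω = φ i} * G (φ i) := by
  classical
  have hae : (fun ω => G (X ω)) =ᵐ[μ]
      fun ω => ∑ i, {ω | X ω = φ i}.indicator (fun _ => G (φ i)) ω := by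
    filter_upwards [hX] with ω ⟨i₀, hi₀⟩
    simp [indicator_apply, ← hi₀, hφ.eq_iff]
  rw [integral_congr_ae hae,
    integral_finsetSum _ fun i _ => (integrable_const _).indicator (hmeas i)]
  simp only [integral_indicator_const _ (hmeas _), smul_eq_mul]

variable {Ω : Type*} [MeasurableSpace Ω] {μ : Measure Ω} {n : ℕ} {σ : Ω → Fin n → ℝ}

lemma measurableSet_eq_signVec (hmeas : ∀ j, Measurable fun ω => σ ω j) (s : Fin n → Bool) :
    MeasurableSet {ω | σ ω = signVec s} :=
  measurableSet_eq_fun (measurable_pi_lambda _ hmeas) measurable_const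

lemma ae_mem_range_signVec [IsProbabilityMeasure μ] (hmeas : ∀ j, Measurable fun ω => σ ω j)
    (hhalf : ∀ j, μ {ω | σ ω j = 1} = 1 / 2 ∧ μ {ω | σ ω j = -1} = 1 / 2) :
    ∀ᵐ ω ∂μ, σ ω ∈ range signVec := by
  have hcoord : ∀ j, ∀ᵐ ω ∂μ, σ ω j = 1 ∨ σ ω j = -1 := by
    intro j
    have hdisj : Disjoint {ω | σ ω j = 1} {ω | σ ω j = -1} :=
      disjoint_left.2 fun ω (h1 : σ ω j = 1) (h2 : σ ω j = -1) => by norm_num [h1] at h2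
    have hunion : μ {ω | σ ω j = 1 ∨ σ ω j = -1} = μ univ := by
      rw [ofPred_or, measure_union hdisj (hmeas j (measurableSet_singleton _)), (hhalf j).1,
        (hhalf j).2, ENNReal.add_halves, measure_univ]
    exact (ae_iff_measure_eq ((hmeas j (measurableSet_singleton _)).union
      (hmeas j (measurableSet_singleton _))).nullMeasurableSet).2 hunion
  filter_upwards [ae_all_iff.2 hcoord] with ω hω
  refine ⟨fun j => decide (σ ω j = 1), funext fun j => ?_⟩
  rcases hω j with h | h <;> norm_num [signVec, h]

lemma measure_eq_signVec (hindep : iIndepFun (fun j ω => σ ω j) μ)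
    (hhalf : ∀ j, μ {ω | σ ω j = 1} = 1 / 2 ∧ μ {ω | σ ω j = -1} = 1 / 2) (s : Fin n → Bool) :
    μ {ω | σ ω = signVec s} = (2 ^ n)⁻¹ := by
  have hinter : {ω | σ ω = signVec s} = ⋂ j, (fun ω => σ ω j) ⁻¹' {signVec s j} := by
    ext ω
    simp [funext_iff]
  rw [hinter, hindep.meas_iInter fun j => ⟨{signVec s j}, measurableSet_singleton _, rfl⟩]
  have hj : ∀ j, μ ((fun ω => σ ω j) ⁻¹' {signVec s j}) = 2⁻¹ := fun j => by
    change μ {ω | σ ω j = signVec s j} = 2⁻¹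
    cases h : s j
    · simpa [signVec, h] using (hhalf j).2
    · simpa [signVec, h] using (hhalf j).1
  simp [hj, ENNReal.inv_pow]

theorem integral_eq_expect_signVec [IsProbabilityMeasure μ]
    (hmeas : ∀ j, Measurable fun ω => σ ω j)
    (hhalf : ∀ j, μ {ω | σ ω j = 1} = 1 / 2 ∧ μ {ω | σ ω j = -1} = 1 / 2)
    (hindep : iIndepFun (fun j ω => σ ω j) μ) (G : (Fin n → ℝ) → ℝ) :
    ∫ ω, G (σ ω) ∂μ = 𝔼 s, G (signVec s) := by
  rw [integral_comp_eq_sum_of_ae_mem_range signVec_injective (measurableSet_eq_signVec hmeas)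
    (ae_mem_range_signVec hmeas hhalf), Fintype.expect_eq_sum_div_card, sum_div]
  refine sum_congr rfl fun s _ => ?_
  simp [measureReal_def, measure_eq_signVec hindep hhalf s, div_eq_inv_mul]

end Transfer

end

/-- Moment bound for `‖Aσ‖₂` with `σ` a Rademacher vector. -/
theorem rademacher_matrix_moment :
    ∀ (m n : ℕ) (A : Matrix (Fin m) (Fin n) ℝ)
      (Ω : Type) [MeasurableSpace Ω] (μ : Measure Ω), IsProbabilityMeasure μ →
    ∀ σ : Ω → Fin n → ℝ,
      (∀ j, Measurable fun ω => σ ω j) →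
      (∀ j, μ {ω | σ ω j = 1} = 1 / 2 ∧ μ {ω | σ ω j = -1} = 1 / 2) →
      iIndepFun (fun (j : Fin n) (ω : Ω) => σ ω j) μ →
    ∀ p : ℝ, 1 ≤ p →
      (∫ ω, l2 (A.mulVec (σ ω)) ^ p ∂μ) ^ (1 / p) ≤
        Real.sqrt (∑ i, ∑ j, A i j ^ 2) + 2 * Real.sqrt (2 * p) * opNorm A := by
  intro m n A Ω _ μ _ σ hmeas hhalf hindep p hp
  rw [integral_eq_expect_signVec hmeas hhalf hindep fun x => l2 (A.mulVec x) ^ p]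
  exact expect_rpow_l2_mulVec_signVec_le A hp

end SDR
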